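/- For every γ ∈ (π/2, π] and every α ≥ 1, there exists an instance (X, f) of a biobjective maximization problem (with X finite, so f(X) − ℝ²_≥ is closed and f(X) is bounded) such that the set of γ-supported solutions is not an α-approximation with respect to the componentwise order. (Concretely, one may take three solutions with f(x₁) = (1, α + 2 + α/tan(γ/2 − π/4)), f(x₂) = (α + 2 + α/tan(γ/2 − π/4), 1), and f(x₃) = (α + 1, α + 1); then x₃ is not γ-supported and is not α-approximated by x₁ or x₂.) -/

import Mathlib

open Real Set Pointwise

noncomputable section

/-- The linear map `T_γ^φ : ℝ² → ℝ²` from the paper, with `φ' = γ - π/2 - φ`. -/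
def Tmap (γ φ : ℝ) (y : ℝ × ℝ) : ℝ × ℝ :=
  (Real.cos (γ - Real.pi/2 - φ) * y.1 + Real.sin (γ - Real.pi/2 - φ) * y.2,
   Real.sin φ * y.1 + Real.cos φ * y.2)

/-- The ordering cone `C_γ^φ = {y : T_γ^φ(y) ≥ 0 componentwise}`. -/
def coneC (γ φ : ℝ) : Set (ℝ × ℝ) :=
  {y : ℝ × ℝ | 0 ≤ (Tmap γ φ y).1 ∧ 0 ≤ (Tmap γ φ y).2}

/-- The relation `y ≤_γ^φ y' ⇔ y' - y ∈ C_γ^φ`. -/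
def leC (γ φ : ℝ) (y y' : ℝ × ℝ) : Prop :=
  y' - y ∈ coneC γ φ

/-- The set of admissible rotation angles `φ ∈ [0, γ - π/2] \ {γ - π, π/2}`. -/
def PhiDomain (γ : ℝ) : Set ℝ :=
  Set.Icc 0 (γ - Real.pi/2) \ {γ - Real.pi, Real.pi/2}

/-- `x` is optimal with respect to `≤_γ^φ` (minimization). -/
def OptimalWrt (γ φ : ℝ) {X : Type} (f : X → ℝ × ℝ) (x : X) : Prop :=
  ¬ ∃ x', f x' ≠ f x ∧ leC γ φ (f x') (f x)

/-- `x` is `γ`-supported (minimization). -/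
def GammaSupported (γ : ℝ) {X : Type} (f : X → ℝ × ℝ) (x : X) : Prop :=
  ∃ φ ∈ PhiDomain γ, OptimalWrt γ φ f x

/-- `x` is efficient (minimization, componentwise order). -/
def Efficient {X : Type} (f : X → ℝ × ℝ) (x : X) : Prop :=
  ¬ ∃ x', f x' ≠ f x ∧ (f x').1 ≤ (f x).1 ∧ (f x').2 ≤ (f x).2

/-- `S` is an `α`-approximation with respect to the componentwise order (minimization). -/
def IsApprox (α : ℝ) {X : Type} (f : X → ℝ × ℝ) (S : Set X) : Prop :=
  ∀ x : X, ∃ x' ∈ S, (f x').1 ≤ α * (f x).1 ∧ (f x').2 ≤ α * (f x).2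

/-- `x` is `α`-approximate for the weighted max-ordering scalarization of `I_γ^φ`
with weights `w₁, w₂`. -/
def MaxOrdApprox (α w₁ w₂ γ φ : ℝ) {X : Type} (f : X → ℝ × ℝ) (x : X) : Prop :=
  ∀ x'' : X, max (w₁ * (Tmap γ φ (f x)).1) (w₂ * (Tmap γ φ (f x)).2) ≤
    α * max (w₁ * (Tmap γ φ (f x'')).1) (w₂ * (Tmap γ φ (f x'')).2)

/-- The weight `w₁ = √(sin φ)/√(cos φ') + √(cos φ)/√(sin φ')`. -/
def wOne (γ φ : ℝ) : ℝ :=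
  Real.sqrt (Real.sin φ) / Real.sqrt (Real.cos (γ - Real.pi/2 - φ)) +
  Real.sqrt (Real.cos φ) / Real.sqrt (Real.sin (γ - Real.pi/2 - φ))

/-- The weight `w₂ = √(sin φ')/√(cos φ) + √(cos φ')/√(sin φ)`. -/
def wTwo (γ φ : ℝ) : ℝ :=
  Real.sqrt (Real.sin (γ - Real.pi/2 - φ)) / Real.sqrt (Real.cos φ) +
  Real.sqrt (Real.cos (γ - Real.pi/2 - φ)) / Real.sqrt (Real.sin φ)

/-- `x` is optimal with respect to `≤_γ^φ` (maximization). -/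
def OptimalWrtMax (γ φ : ℝ) {X : Type} (f : X → ℝ × ℝ) (x : X) : Prop :=
  ¬ ∃ x', f x' ≠ f x ∧ leC γ φ (f x) (f x')

/-- `x` is `γ`-supported (maximization). -/
def GammaSupportedMax (γ : ℝ) {X : Type} (f : X → ℝ × ℝ) (x : X) : Prop :=
  ∃ φ ∈ PhiDomain γ, OptimalWrtMax γ φ f x

/-- `S` is an `α`-approximation with respect to the componentwise order (maximization). -/
def IsApproxMax (α : ℝ) {X : Type} (f : X → ℝ × ℝ) (S : Set X) : Prop :=
  ∀ x : X, ∃ x' ∈ S, (f x).1 ≤ α * (f x').1 ∧ (f x).2 ≤ α * (f x').2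

/-! Put `β = γ/2 - π/4 ∈ (0, π/4]`, the midpoint of the admissible range `[0, γ - π/2]` of `φ`,
and take the points `(1, M)`, `(M, 1)`, `(α + 1, α + 1)` with `M = α + 2 + α cot β`. The last one
is α-approximated by neither of the others, yet it is dominated for `≤_γ^φ` by `(M, 1)` when
`φ ≥ β` and by `(1, M)` when `φ ≤ β`, so it is not `γ`-supported. Swapping the coordinates
exchanges `φ` and `φ'`, and the remaining domination reduces to
`sin θ · (1 + α cot β) - α cos θ = sin θ + α sin (θ - β) / sin β ≥ 0` for `θ ∈ [β, π]`. -/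

lemma sin_mul_one_add_cot_add_cos_mul_neg_nonneg {α β θ : ℝ} (hα : 0 ≤ α) (hβ : 0 < β)
    (hβπ : β < π) (hβθ : β ≤ θ) (hθ : θ ≤ π) :
    0 ≤ sin θ * (1 + α * cot β) + cos θ * -α := by
  have hsinβ : 0 < sin β := sin_pos_of_pos_of_lt_pi hβ hβπ
  have key : sin θ * (1 + α * cot β) + cos θ * -α = sin θ + α * sin (θ - β) / sin β := by
    rw [cot_eq_cos_div_sin, sin_sub]
    field_simp
    ring
  rw [key]
  have hsinθ := sin_nonneg_of_nonneg_of_le_pi (by linarith) hθ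
  have hsinθβ := sin_nonneg_of_nonneg_of_le_pi (sub_nonneg.2 hβθ) (by linarith)
  positivity

lemma swap_mem_coneC_iff {γ φ : ℝ} {y : ℝ × ℝ} :
    y.swap ∈ coneC γ φ ↔ y ∈ coneC γ (γ - π / 2 - φ) := by
  simp only [coneC, Tmap, Set.mem_ofPred_eq, Prod.fst_swap, Prod.snd_swap,
    sub_sub_cancel]
  constructor <;> rintro ⟨h₁, h₂⟩ <;> constructor <;> linarith

lemma one_add_cot_mem_coneC {α β φ : ℝ} (hα : 0 ≤ α) (hβ : 0 < β) (hβπ : β ≤ π / 4)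
    (hβφ : β ≤ φ) (hφ : φ ≤ 2 * β) :
    (1 + α * cot β, -α) ∈ coneC (π / 2 + 2 * β) φ := by
  have hangle : π / 2 + 2 * β - π / 2 - φ = 2 * β - φ := by ring
  have hβπ' : β < π := by linarith [pi_pos]
  simp only [coneC, Tmap, Set.mem_ofPred_eq]
  rw [hangle, ← sin_pi_div_two_sub (2 * β - φ), ← cos_pi_div_two_sub (2 * β - φ)]
  exact ⟨sin_mul_one_add_cot_add_cos_mul_neg_nonneg hα hβ hβπ' (by linarith) (by linarith),
    sin_mul_one_add_cot_add_cos_mul_neg_nonneg hα hβ hβπ' hβφ (by linarith)⟩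

lemma cot_nonneg_of_nonneg_of_le_pi_div_two {β : ℝ} (hβ : 0 ≤ β) (hβπ : β ≤ π / 2) :
    0 ≤ cot β := by
  rw [cot_eq_cos_div_sin]
  exact div_nonneg (cos_nonneg_of_neg_pi_div_two_le_of_le (by linarith [pi_pos]) hβπ)
    (sin_nonneg_of_nonneg_of_le_pi hβ (by linarith [pi_pos]))

def cotInstance (α β : ℝ) : Fin 3 → ℝ × ℝ :=
  ![(1, α + 2 + α * cot β), (α + 2 + α * cot β, 1), (α + 1, α + 1)]

@[simp] lemma cotInstance_zero (α β : ℝ) : cotInstance α β 0 = (1, α + 2 + α * cot β) := rfl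

@[simp] lemma cotInstance_one (α β : ℝ) : cotInstance α β 1 = (α + 2 + α * cot β, 1) := rfl

@[simp] lemma cotInstance_two (α β : ℝ) : cotInstance α β 2 = (α + 1, α + 1) := rfl

lemma cotInstance_pos {α β : ℝ} (hα : 0 ≤ α) (hβ : 0 ≤ β) (hβπ : β ≤ π / 2) (x : Fin 3) :
    0 < (cotInstance α β x).1 ∧ 0 < (cotInstance α β x).2 := by
  have hM : 0 < α + 2 + α * cot β := by
    have := cot_nonneg_of_nonneg_of_le_pi_div_two hβ hβπ
    positivity
  fin_cases x <;> simp <;> linarith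

lemma not_gammaSupportedMax_cotInstance {α β : ℝ} (hα : 0 ≤ α) (hβ : 0 < β)
    (hβπ : β ≤ π / 4) : ¬ GammaSupportedMax (π / 2 + 2 * β) (cotInstance α β) 2 := by
  rintro ⟨φ, ⟨⟨hφ₀, hφ⟩, -⟩, hopt⟩
  have hφ : φ ≤ 2 * β := by linarith
  have hdiff : cotInstance α β 1 - cotInstance α β 2 = (1 + α * cot β, -α) := by
    simp only [cotInstance_one, cotInstance_two, Prod.mk_sub_mk, Prod.mk.injEq]
    constructor <;> ring
  have hdiff' : cotInstance α β 0 - cotInstance α β 2 = (1 + α * cot β, -α).swap := by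
    simp only [cotInstance_zero, cotInstance_two, Prod.mk_sub_mk, Prod.swap_prod_mk,
      Prod.mk.injEq]
    constructor <;> ring
  have hne : (1 + α * cot β, -α) ≠ 0 := fun h => by
    have := cot_nonneg_of_nonneg_of_le_pi_div_two hβ.le (by linarith [pi_pos])
    have h₁ : 1 + α * cot β = 0 := congrArg Prod.fst h
    nlinarith
  rcases le_total β φ with hβφ | hφβ
  · refine hopt ⟨1, fun h => hne ?_, ?_⟩
    · rw [← hdiff, h, sub_self]
    · rw [leC, hdiff]
      exact one_add_cot_mem_coneC hα hβ hβπ hβφ hφ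
  · refine hopt ⟨0, fun h => hne ?_, ?_⟩
    · rw [← Prod.swap_inj, ← hdiff', h, sub_self, Prod.swap_zero]
    · rw [leC, hdiff', swap_mem_coneC_iff]
      exact one_add_cot_mem_coneC hα hβ hβπ (by linarith) (by linarith)

/-- for maximization, for every `γ ∈ (π/2, π]` and `α ≥ 1` there is a
(finite) instance where the set of `γ`-supported solutions is not an `α`-approximation. -/
theorem stmt_19 (γ α : ℝ) (hγ : γ ∈ Set.Ioc (Real.pi/2) Real.pi) (hα : 1 ≤ α) :
    ∃ (X : Type) (_ : Fintype X) (f : X → ℝ × ℝ), Nonempty X ∧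
      (∀ x, 0 < (f x).1 ∧ 0 < (f x).2) ∧
      ¬ IsApproxMax α f {x : X | GammaSupportedMax γ f x} := by
  obtain ⟨β, rfl⟩ : ∃ β, γ = π / 2 + 2 * β := ⟨(γ - π / 2) / 2, by ring⟩
  have hβ : 0 < β := by linarith [hγ.1]
  have hβπ : β ≤ π / 4 := by linarith [hγ.2]
  refine ⟨Fin 3, inferInstance, cotInstance α β, ⟨0⟩,
    cotInstance_pos (by linarith) hβ.le (by linarith [pi_pos]), fun happrox => ?_⟩
  obtain ⟨x, hx, h₁, h₂⟩ := happrox 2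
  fin_cases x
  · simp at h₁
    linarith
  · simp at h₂
    linarith
  · exact not_gammaSupportedMax_cotInstance (by linarith) hβ hβπ hx
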